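/- Let s be a real number with 0 < |s| < 1 and s ≠ 0, and let T_X be the 3×3 real symmetric matrix with (T_X)_{12} = (T_X)_{21} = 1 and all other entries 0. Then the shifted QR step applied to T_X with shift s yields F(s, T_X) = (1/(1+s^2)) · [[-2s, 1-s^2, 0], [1-s^2, 2s, 0], [0, 0, 0]]; in particular this expression extends continuously to s = 0 with value T_X. -/

import Mathlib

/-!
Writing `qᵢ` for the `i`-th row of `Q`, one has `Qᵀ T_X Q = q₀ q₁ᵀ + q₁ q₀ᵀ`, so only the first two
rows of `Q` matter. They are pinned down by the vanishing of the subdiagonal entries of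
`R = Qᵀ (T_X - s I)`, by orthonormality of the rows and columns of `Q`, and by the signs of the
diagonal: `R₀₀ = (1 + s²) Q₁₀` and `R₁₁ = (1 - s²) Q₀₁`, the latter being where `|s| < 1` enters.
The outcome is `q₀ = c (-s, 1, 0)` and `q₁ = c (1, s, 0)` with `c² = 1 / (1 + s²)`.
-/

open Matrix

noncomputable def TX : Matrix (Fin 3) (Fin 3) ℝ := !![0,1,0;1,0,0;0,0,0]

/-- The matrix-valued expression for the shifted QR step on `TX`. -/
noncomputable def Fstep (s : ℝ) : Matrix (Fin 3) (Fin 3) ℝ :=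
  (1/(1+s^2)) • !![-2*s, 1-s^2, 0; 1-s^2, 2*s, 0; 0, 0, 0]

theorem TX_sub_smul_one (s : ℝ) : TX - s • 1 = !![-s, 1, 0; 1, -s, 0; 0, 0, -s] := by
  ext i j
  fin_cases i <;> fin_cases j <;> simp [TX]

theorem transpose_mul_TX_mul (Q : Matrix (Fin 3) (Fin 3) ℝ) :
    Qᵀ * TX * Q = vecMulVec (Q 0) (Q 1) + vecMulVec (Q 1) (Q 0) := by
  ext i j
  simp [TX, mul_apply, Fin.sum_univ_three, vecMulVec]
  ring

theorem Fstep_eq (s : ℝ) :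
    Fstep s = (1 + s ^ 2)⁻¹ •
      (vecMulVec ![-s, 1, 0] ![1, s, 0] + vecMulVec ![1, s, 0] ![-s, 1, 0]) := by
  rw [Fstep, one_div]
  congr 1
  ext i j
  fin_cases i <;> fin_cases j <;> simp [vecMulVec] <;> ring

theorem Fstep_zero : Fstep 0 = TX := by
  ext i j
  fin_cases i <;> fin_cases j <;> simp [Fstep, TX]

theorem continuous_Fstep : Continuous Fstep := by
  unfold Fstep
  fun_prop (disch := intros; positivity)

theorem exists_rows_eq_of_TX_sub_smul_one_eq_mul {s : ℝ} (hs : |s| < 1)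
    {Q R : Matrix (Fin 3) (Fin 3) ℝ} (hQ : Qᵀ * Q = 1) (hR : R.BlockTriangular id)
    (hR₀ : 0 < R 0 0) (hR₁ : 0 < R 1 1) (hQR : TX - s • 1 = Q * R) :
    ∃ c : ℝ, c ^ 2 * (1 + s ^ 2) = 1 ∧ Q 0 = c • ![-s, 1, 0] ∧ Q 1 = c • ![1, s, 0] := by
  have hRQ : Qᵀ * !![-s, 1, 0; 1, -s, 0; 0, 0, -s] = R := by
    rw [← TX_sub_smul_one, hQR, ← mul_assoc, hQ, one_mul]
  have hQR' : !![-s, 1, 0; 1, -s, 0; 0, 0, -s] = Q * R := by rw [← TX_sub_smul_one, hQR]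
  have hQQ : Q * Qᵀ = 1 := mul_eq_one_comm.mp hQ
  have hR10 : R 1 0 = 0 := hR (by decide)
  have hR20 : R 2 0 = 0 := hR (by decide)
  have hR21 : R 2 1 = 0 := hR (by decide)
  have r00 := congrFun₂ hRQ 0 0
  have r10 := congrFun₂ hRQ 1 0
  have r11 := congrFun₂ hRQ 1 1
  have r20 := congrFun₂ hRQ 2 0
  have r21 := congrFun₂ hRQ 2 1
  have a20 := congrFun₂ hQR' 2 0
  have c00 := congrFun₂ hQ 0 0
  have c01 := congrFun₂ hQ 0 1
  have w00 := congrFun₂ hQQ 0 0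
  simp only [Fin.isValue, mul_apply, transpose_apply, of_apply, cons_val', cons_val_zero,
    cons_val_fin_one, Fin.sum_univ_three, mul_neg, cons_val_one, mul_one, cons_val, mul_zero,
    add_zero, hR10, hR20, hR21, zero_eq_mul, one_apply_eq, ne_eq, zero_ne_one, not_false_eq_true,
    one_apply_ne] at r00 r10 r11 r20 r21 a20 c00 c01 w00
  have hs1 : 0 < 1 - s ^ 2 := by rw [sub_pos, sq_lt_one_iff_abs_lt_one]; exact hs
  have hQ20 : Q 2 0 = 0 := a20.resolve_right hR₀.ne'
  have hQ11 : Q 1 1 = s * Q 0 1 := by linear_combination r10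
  have hQ02 : Q 0 2 = 0 := by
    have h : Q 0 2 * (1 - s ^ 2) = 0 := by linear_combination r21 + s * r20
    exact (mul_eq_zero.1 h).resolve_right hs1.ne'
  have hQ12 : Q 1 2 = 0 := by linear_combination r20 + s * hQ02
  have hQ01 : 0 < Q 0 1 := by
    have h : Q 0 1 * (1 - s ^ 2) = R 1 1 := by linear_combination r11 + s * hQ11
    exact pos_of_mul_pos_left (h ▸ hR₁) hs1.le
  have hQ00 : Q 0 0 = -s * Q 1 0 := by
    have h : Q 0 1 * (Q 0 0 + s * Q 1 0) = 0 := by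
      linear_combination c01 - Q 1 0 * hQ11 - Q 2 1 * hQ20
    linear_combination (mul_eq_zero.1 h).resolve_left hQ01.ne'
  have hQ10 : 0 < Q 1 0 := by
    have h : Q 1 0 * (1 + s ^ 2) = R 0 0 := by linear_combination r00 + s * hQ00
    exact pos_of_mul_pos_left (h ▸ hR₀) (by positivity)
  have hc : Q 1 0 ^ 2 * (1 + s ^ 2) = 1 := by
    linear_combination c00 - (Q 0 0 - s * Q 1 0) * hQ00 - Q 2 0 * hQ20
  have hQ01_eq : Q 0 1 = Q 1 0 := by
    refine (sq_eq_sq₀ hQ01.le hQ10.le).1 ?_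
    linear_combination w00 - hc - (Q 0 0 - s * Q 1 0) * hQ00 - Q 0 2 * hQ02
  refine ⟨Q 1 0, hc, ?_, ?_⟩ <;> ext j <;> fin_cases j <;>
    simp [hQ00, hQ01_eq, hQ02, hQ11, hQ12] <;> ring

theorem stmt_0 :
    (∀ s : ℝ, 0 < |s| → |s| < 1 → s ≠ 0 →
      ∀ Q R : Matrix (Fin 3) (Fin 3) ℝ,
        Qᵀ * Q = 1 →
        R.BlockTriangular id →
        (∀ i, 0 < R i i) →
        TX - s • (1 : Matrix (Fin 3) (Fin 3) ℝ) = Q * R →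
        Qᵀ * TX * Q = Fstep s) ∧
    Fstep 0 = TX ∧ ContinuousAt Fstep 0 := by
  refine ⟨fun s _ hs _ Q R hQ hR hRpos hQR => ?_, Fstep_zero, continuous_Fstep.continuousAt⟩
  obtain ⟨c, hc, hQ0, hQ1⟩ :=
    exists_rows_eq_of_TX_sub_smul_one_eq_mul hs hQ hR (hRpos 0) (hRpos 1) hQR
  have hc' : c * c = (1 + s ^ 2)⁻¹ := eq_inv_of_mul_eq_one_left (by rw [← sq, hc])
  rw [transpose_mul_TX_mul, hQ0, hQ1, Fstep_eq]
  simp only [smul_vecMulVec, vecMulVec_smul, smul_smul, hc', ← smul_add]
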